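/- arXiv:2002.09269 — 5 statements merged into one kernel-verified Lean document; each statement's English description precedes it below -/
import Mathlib

section
/- Let m ≥ 1 and for u ∈ (0,1) let S_u be a binomial random variable with parameters (m, u). Then for every λ ∈ (0, 1/7) and every x ≥ 0, ∫_0^1 P(S_u ≤ m x) du ≤ ((1-λ)/(1-7λ)) x + 1/(3mλ). -/
lemma prodaux (k n : ℕ) :
    (∏ j ∈ Finset.range (n + 1), ((k : ℂ) + 1 + j)) * k.factorial
      = ((k + n + 1).factorial : ℂ) := by
  induction n with
  | zero =>
      rw [Finset.prod_range_one]
      rw [show k + 0 + 1 = k + 1 from rfl, Nat.factorial_succ]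
      push_cast; ring
  | succ n ih =>
      have hf : (k + (n + 1) + 1).factorial = (k + n + 1 + 1) * (k + n + 1).factorial := by
        rw [show k + (n + 1) + 1 = (k + n + 1) + 1 from by ring, Nat.factorial_succ]
      rw [Finset.prod_range_succ, mul_right_comm, ih, hf]
      push_cast; ring

lemma beta_nat (k n : ℕ) :
    ∫ u in (0:ℝ)..1, u ^ k * (1 - u) ^ n
      = (k.factorial * n.factorial : ℝ) / (k + n + 1).factorial := by
  have hk : 0 < ((k : ℂ) + 1).re := by
    simp only [Complex.add_re, Complex.natCast_re, Complex.one_re]; positivity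
  have h := Complex.betaIntegral_eval_nat_add_one_right hk n
  have hint : Complex.betaIntegral ((k : ℂ) + 1) ((n : ℂ) + 1)
      = ((∫ u in (0:ℝ)..1, u ^ k * (1 - u) ^ n : ℝ) : ℂ) := by
    rw [Complex.betaIntegral, ← intervalIntegral.integral_ofReal]
    refine intervalIntegral.integral_congr fun u _ => ?_
    rw [add_sub_cancel_right, add_sub_cancel_right,
      Complex.cpow_natCast, Complex.cpow_natCast]
    push_cast; ring
  rw [hint] at h
  have hne : (∏ j ∈ Finset.range (n + 1), ((k : ℂ) + 1 + j)) ≠ 0 := by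
    refine Finset.prod_ne_zero_iff.2 fun j _ => ?_
    intro hc
    have : ((k : ℂ) + 1 + j).re = 0 := by rw [hc]; simp
    simp only [Complex.add_re, Complex.natCast_re, Complex.one_re] at this
    nlinarith [Nat.cast_nonneg (α := ℝ) k, Nat.cast_nonneg (α := ℝ) j]
  have hfne : ((k + n + 1).factorial : ℂ) ≠ 0 :=
    Nat.cast_ne_zero.2 (Nat.factorial_ne_zero _)
  have hval : ((n.factorial : ℂ)) / ∏ j ∈ Finset.range (n + 1), ((k : ℂ) + 1 + j)
      = (((k.factorial * n.factorial : ℝ) / (k + n + 1).factorial : ℝ) : ℂ) := by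
    push_cast
    rw [div_eq_div_iff hne hfne, ← prodaux k n]; ring
  rw [hval] at h
  exact Complex.ofReal_inj.mp h

lemma choose_beta (m k : ℕ) (hk : k ≤ m) :
    (m.choose k : ℝ) * ∫ u in (0:ℝ)..1, u ^ k * (1 - u) ^ (m - k)
      = 1 / (m + 1) := by
  rw [beta_nat]
  have h1 : k + (m - k) + 1 = m + 1 := by omega
  have h2 : m.choose k * (k.factorial * (m - k).factorial) = m.factorial := by
    rw [← Nat.choose_mul_factorial_mul_factorial hk]; ring
  have h3 : (m + 1).factorial = (m + 1) * m.factorial := Nat.factorial_succ m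
  rw [h1, h3]
  have hmf : (m.factorial : ℝ) ≠ 0 := Nat.cast_ne_zero.2 (Nat.factorial_ne_zero _)
  have hm1 : ((m : ℝ) + 1) ≠ 0 := by positivity
  field_simp
  push_cast [← h2]
  ring

/-- `P(S_u ≤ m x)` for `S_u ∼ Binomial(m, u)`, written explicitly. -/
noncomputable def binomCdf (m : ℕ) (u x : ℝ) : ℝ :=
  ∑ k ∈ Finset.range (m + 1),
    if (k : ℝ) ≤ (m : ℝ) * x then (m.choose k : ℝ) * u ^ k * (1 - u) ^ (m - k) else 0

/-- For `m ≥ 1`, `λ ∈ (0, 1/7)` and `x ≥ 0`,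
`∫_0^1 P(S_u ≤ m x) du ≤ ((1-λ)/(1-7λ)) x + 1/(3mλ)`. -/
theorem stmt_3 (m : ℕ) (hm : 1 ≤ m) (l : ℝ) (hl0 : 0 < l) (hl7 : l < 1 / 7)
    (x : ℝ) (hx : 0 ≤ x) :
    ∫ u in (0:ℝ)..1, binomCdf m u x ≤
      (1 - l) / (1 - 7 * l) * x + 1 / (3 * (m : ℝ) * l) := by
  have hmR : (1:ℝ) ≤ (m : ℝ) := by exact_mod_cast hm
  -- integrability of each summand
  have hintg : ∀ k ∈ Finset.range (m + 1), IntervalIntegrable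
      (fun u : ℝ => if (k : ℝ) ≤ (m : ℝ) * x then
        (m.choose k : ℝ) * u ^ k * (1 - u) ^ (m - k) else 0) MeasureTheory.volume 0 1 := by
    intro k _
    by_cases h : (k : ℝ) ≤ (m : ℝ) * x
    · simp only [if_pos h]
      exact (Continuous.intervalIntegrable (by fun_prop) 0 1)
    · simp only [if_neg h]
      exact intervalIntegrable_const
  have hswap : ∫ u in (0:ℝ)..1, binomCdf m u x
      = ∑ k ∈ Finset.range (m + 1), ∫ u in (0:ℝ)..1,
        (if (k : ℝ) ≤ (m : ℝ) * x then
          (m.choose k : ℝ) * u ^ k * (1 - u) ^ (m - k) else 0) := by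
    unfold binomCdf
    exact intervalIntegral.integral_finset_sum hintg
  have hterm : ∀ k ∈ Finset.range (m + 1), (∫ u in (0:ℝ)..1,
      (if (k : ℝ) ≤ (m : ℝ) * x then
        (m.choose k : ℝ) * u ^ k * (1 - u) ^ (m - k) else 0))
      = if (k : ℝ) ≤ (m : ℝ) * x then 1 / ((m : ℝ) + 1) else 0 := by
    intro k hk
    by_cases h : (k : ℝ) ≤ (m : ℝ) * x
    · simp only [if_pos h]
      have : (fun u : ℝ => (m.choose k : ℝ) * u ^ k * (1 - u) ^ (m - k))
          = fun u : ℝ => (m.choose k : ℝ) * (u ^ k * (1 - u) ^ (m - k)) := by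
        funext u; ring
      rw [this, intervalIntegral.integral_const_mul,
        choose_beta m k (by simpa using Nat.lt_succ_iff.mp (Finset.mem_range.mp hk))]
    · simp [if_neg h]
  rw [hswap, Finset.sum_congr rfl hterm, ← Finset.sum_filter]
  rw [Finset.sum_const, nsmul_eq_mul]
  set c := ((Finset.range (m + 1)).filter fun k : ℕ => (k : ℝ) ≤ (m : ℝ) * x).card with hc
  have hcard : (c : ℝ) ≤ (m : ℝ) * x + 1 := by
    have hsub : ((Finset.range (m + 1)).filter fun k : ℕ => (k : ℝ) ≤ (m : ℝ) * x)
        ⊆ Finset.range (⌊(m : ℝ) * x⌋₊ + 1) := by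
      intro k hk
      simp only [Finset.mem_filter, Finset.mem_range] at hk ⊢
      exact Nat.lt_succ_of_le (Nat.le_floor hk.2)
    have h1 : c ≤ ⌊(m : ℝ) * x⌋₊ + 1 := by
      simpa using Finset.card_le_card hsub
    have h2 : (⌊(m : ℝ) * x⌋₊ : ℝ) ≤ (m : ℝ) * x := Nat.floor_le (by positivity)
    calc (c : ℝ) ≤ (⌊(m : ℝ) * x⌋₊ : ℝ) + 1 := by exact_mod_cast h1
      _ ≤ (m : ℝ) * x + 1 := by linarith
  -- final numeric estimate
  have h7 : 0 < 1 - 7 * l := by linarith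
  have hm1 : (0:ℝ) < (m : ℝ) + 1 := by linarith
  have hA : (c : ℝ) * (1 / ((m : ℝ) + 1)) ≤ x + 1 / ((m : ℝ) + 1) := by
    rw [mul_one_div, div_le_iff₀ hm1]
    have hone : (x + 1 / ((m : ℝ) + 1)) * ((m : ℝ) + 1) = x * ((m : ℝ) + 1) + 1 := by
      field_simp
    rw [hone]; nlinarith
  have hB : 1 / ((m : ℝ) + 1) ≤ 1 / (3 * (m : ℝ) * l) := by
    apply one_div_le_one_div_of_le (by positivity)
    nlinarith
  have hC : x ≤ (1 - l) / (1 - 7 * l) * x := by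
    have h1 : (1:ℝ) ≤ (1 - l) / (1 - 7 * l) := (one_le_div h7).2 (by linarith)
    nlinarith
  linarith
end

section
/- Let W_1, ..., W_p be real random variables such that the nonzero values among them are almost surely pairwise distinct. Define for each j: π_j = (1 + #{k : W_k ≤ -W_j})/p if W_j > 0 and π_j = 1 otherwise. Fix α ∈ (0,1). Then the knockoff selection set {j : W_j ≥ τ_+}, where τ_+ = min{t > 0 : (1 + #{j : W_j ≤ -t}) / max(#{j : W_j ≥ t}, 1) ≤ α}, equals the set selected by the Benjamini–Hochberg step-up procedure at level α applied to π_1, ..., π_p (i.e., {j : π_j ≤ π_{(k̂)}} with k̂ = max{k : π_{(k)} ≤ kα/p}). -/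
open MeasureTheory

/-- Intermediate p-values: `π_j = (1 + #{k : W_k ≤ -W_j})/p` if `W_j > 0`, else `1`. -/
noncomputable def interPval {p : ℕ} (W : Fin p → ℝ) (j : Fin p) : ℝ :=
  if 0 < W j then (1 + (({k | W k ≤ -W j} : Set (Fin p)).ncard : ℝ)) / p else 1

lemma stmt_5_key (p : ℕ) (hp : 1 ≤ p) (w : Fin p → ℝ) (α : ℝ)
    (hα0 : 0 < α) (hα1 : α < 1) :
    {j : Fin p | ∃ t : ℝ, 0 < t ∧
        (1 + (({i | w i ≤ -t} : Set (Fin p)).ncard : ℝ)) /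
            max (({i | t ≤ w i} : Set (Fin p)).ncard : ℝ) 1 ≤ α ∧
        t ≤ w j} =
    {j : Fin p | ∃ k : ℕ, 1 ≤ k ∧ k ≤ p ∧
        (k : ℝ) ≤ (({i | interPval w i ≤ k * α / p} : Set (Fin p)).ncard : ℝ) ∧
        interPval w j ≤ k * α / p} := by
  have hp0 : (0:ℝ) < p := by exact_mod_cast hp
  ext j
  simp only [Set.mem_setOf_eq]
  constructor
  · rintro ⟨t, ht, hratio, htj⟩
    have hS1 : 1 ≤ ({i | t ≤ w i} : Set (Fin p)).ncard :=
      (Set.ncard_pos (Set.toFinite _)).mpr ⟨j, htj⟩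
    set m := ({i | t ≤ w i} : Set (Fin p)).ncard with hm
    have hm1 : (1:ℝ) ≤ m := by exact_mod_cast hS1
    rw [max_eq_left hm1] at hratio
    have hnum : 1 + (({i | w i ≤ -t} : Set (Fin p)).ncard : ℝ) ≤ α * m := by
      rw [div_le_iff₀ (by linarith)] at hratio
      linarith
    have hkey : ∀ i : Fin p, t ≤ w i → interPval w i ≤ m * α / p := by
      intro i hi
      have hwi : 0 < w i := lt_of_lt_of_le ht hi
      unfold interPval
      rw [if_pos hwi, div_le_div_iff₀ hp0 hp0]
      have hsub : ({k | w k ≤ -w i} : Set (Fin p)) ⊆ {k | w k ≤ -t} := by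
        intro k hk
        simp only [Set.mem_setOf_eq] at hk ⊢
        linarith
      have hle : (({k | w k ≤ -w i} : Set (Fin p)).ncard : ℝ) ≤
          (({k | w k ≤ -t} : Set (Fin p)).ncard : ℝ) := by
        exact_mod_cast Set.ncard_le_ncard hsub (Set.toFinite _)
      nlinarith
    refine ⟨m, hS1, ?_, ?_, hkey j htj⟩
    · have := Set.ncard_le_ncard (Set.subset_univ {i | t ≤ w i}) Set.finite_univ
      simpa [Set.ncard_univ] using this
    · have hsub : ({i | t ≤ w i} : Set (Fin p)) ⊆ {i | interPval w i ≤ m * α / p} :=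
        fun i hi => hkey i hi
      exact_mod_cast Set.ncard_le_ncard hsub (Set.toFinite _)
  · rintro ⟨k, hk1, hkp, hcard, hj⟩
    have hk1' : (1:ℝ) ≤ k := by exact_mod_cast hk1
    have hkap : (k:ℝ) * α / p < 1 := by
      rw [div_lt_one hp0]
      have h1 : (k:ℝ) * α < k * 1 := by
        apply mul_lt_mul_of_pos_left hα1 (by linarith)
      have h2 : (k:ℝ) ≤ p := by exact_mod_cast hkp
      linarith
    have hpos : ∀ i : Fin p, interPval w i ≤ k * α / p → 0 < w i := by
      intro i hi
      by_contra h
      unfold interPval at hi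
      rw [if_neg h] at hi
      linarith
    obtain ⟨j₀, hj₀A, hmin⟩ := Set.exists_min_image
      ({i | interPval w i ≤ k * α / p} : Set (Fin p)) w (Set.toFinite _) ⟨j, hj⟩
    have ht : 0 < w j₀ := hpos j₀ hj₀A
    refine ⟨w j₀, ht, ?_, hmin j hj⟩
    have hnum : 1 + (({i | w i ≤ -w j₀} : Set (Fin p)).ncard : ℝ) ≤ (k:ℝ) * α := by
      have := hj₀A
      simp only [Set.mem_setOf_eq] at this
      unfold interPval at this
      rw [if_pos ht, div_le_div_iff₀ hp0 hp0] at this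
      nlinarith
    have hsub : ({i | interPval w i ≤ k * α / p} : Set (Fin p)) ⊆ {i | w j₀ ≤ w i} :=
      fun i hi => hmin i hi
    have hden : (k:ℝ) ≤ (({i | w j₀ ≤ w i} : Set (Fin p)).ncard : ℝ) := by
      have : (({i | interPval w i ≤ k * α / p} : Set (Fin p)).ncard : ℝ) ≤
          (({i | w j₀ ≤ w i} : Set (Fin p)).ncard : ℝ) := by
        exact_mod_cast Set.ncard_le_ncard hsub (Set.toFinite _)
      linarith
    have hM : (k:ℝ) ≤ max (({i | w j₀ ≤ w i} : Set (Fin p)).ncard : ℝ) 1 :=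
      le_trans hden (le_max_left _ _)
    rw [div_le_iff₀ (by positivity : (0:ℝ) < max (({i | w j₀ ≤ w i} : Set (Fin p)).ncard : ℝ) 1)]
    nlinarith [le_max_right (({i | w j₀ ≤ w i} : Set (Fin p)).ncard : ℝ) 1]

/-- Equivalence of the knockoff selection set with the Benjamini–Hochberg step-up
selection applied to the intermediate p-values, almost surely, when the nonzero
`W_j` are a.s. pairwise distinct.  The knockoff set `{j : W_j ≥ τ₊}` with
`τ₊ = min{t > 0 : (1 + #{i : W_i ≤ -t}) / max(#{i : W_i ≥ t}, 1) ≤ α}` is written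
equivalently as `{j | ∃ t > 0, ratio(t) ≤ α ∧ t ≤ W_j}` (the minimum being
attained), and the BH set `{j : π_j ≤ π_(k̂)}` with `k̂ = max{k : π_(k) ≤ kα/p}`
as `{j | ∃ k ∈ [1,p], #{i : π_i ≤ kα/p} ≥ k ∧ π_j ≤ kα/p}` (using
`π_(k) ≤ kα/p ↔ #{i : π_i ≤ kα/p} ≥ k`). -/
theorem stmt_5 {Ω : Type*} [MeasurableSpace Ω] (μ : Measure Ω)
    [IsProbabilityMeasure μ] (p : ℕ) (hp : 1 ≤ p) (W : Fin p → Ω → ℝ)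
    (hW : ∀ j, Measurable (W j)) (α : ℝ) (hα : α ∈ Set.Ioo (0:ℝ) 1)
    (hdist : ∀ᵐ ω ∂μ, ∀ j j' : Fin p, j ≠ j' →
      W j ω ≠ 0 → W j' ω ≠ 0 → W j ω ≠ W j' ω) :
    ∀ᵐ ω ∂μ,
      {j : Fin p | ∃ t : ℝ, 0 < t ∧
          (1 + (({i | W i ω ≤ -t} : Set (Fin p)).ncard : ℝ)) /
              max (({i | t ≤ W i ω} : Set (Fin p)).ncard : ℝ) 1 ≤ α ∧
          t ≤ W j ω} =
      {j : Fin p | ∃ k : ℕ, 1 ≤ k ∧ k ≤ p ∧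
          (k : ℝ) ≤ (({i | interPval (fun i => W i ω) i ≤ k * α / p} :
              Set (Fin p)).ncard : ℝ) ∧
          interPval (fun i => W i ω) j ≤ k * α / p} := by
  filter_upwards with ω
  exact stmt_5_key p hp (fun i => W i ω) α hα.1 hα.2
end

section
/- Let W_1, ..., W_p be i.i.d. real random variables with a common distribution P_0 symmetric about 0. Fix j with |S^c| many null indices containing j, where S^c = [p] (all null). Define π_j = (1 + #{k : W_k ≤ -W_j})/p if W_j > 0 and π_j = 1 otherwise. Then for all t ∈ [0,1], P(π_j ≤ t) ≤ κ t, where κ = (√22 - 2)/(7√22 - 32) ≤ 3.24. -/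
open MeasureTheory ProbabilityTheory

/-!
The bound holds even with `t` in place of `κ t`, since `κ ≥ 1`. Flipping the sign of `W_j`
preserves the i.i.d. symmetric law, and after the flip `π_j ≤ t` forces the `j`-th coordinate to
have rank `#{k : W_k ≤ W_j}` at most `M = ⌊p t⌋`. By exchangeability this event has the same
probability for every index, and at most `M` indices can have rank at most `M`, so its probability
is at most `M / p ≤ t`.
-/

open Finset Function
open scoped ENNReal

section Rank

variable {ι α : Type*} [Fintype ι] [LinearOrder α]

def rank (x : ι → α) (i : ι) : ℕ := #{k | x k ≤ x i}

lemma rank_comp_equiv (x : ι → α) (σ : ι ≃ ι) (i : ι) : rank (x ∘ σ) i = rank x (σ i) :=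
  card_equiv σ fun k => by simp

lemma card_rank_le_le (x : ι → α) (M : ℕ) : #{i | rank x i ≤ M} ≤ M := by
  set D : Finset ι := {i | rank x i ≤ M}
  rcases D.eq_empty_or_nonempty with hD | hD
  · simp [hD]
  obtain ⟨i₀, hi₀, hmax⟩ := D.exists_max_image x hD
  calc #D ≤ rank x i₀ := card_le_card fun i hi => mem_filter.2 ⟨mem_univ i, hmax i hi⟩
    _ ≤ M := (mem_filter.1 hi₀).2

lemma rank_update_neg [DecidableEq ι] [AddCommGroup α] [IsOrderedAddMonoid α] (x : ι → α)
    {j : ι} (hj : 0 < x j) : rank (update x j (-x j)) j = #{k | x k ≤ -x j} + 1 := by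
  have : univ.filter (fun k => update x j (-x j) k ≤ update x j (-x j) j)
      = insert j (univ.filter fun k => x k ≤ -x j) := by
    ext k
    rcases eq_or_ne k j with rfl | hk <;> simp [update_of_ne, *]
  rw [rank, this, card_insert_of_notMem (by simpa using hj)]

end Rank

lemma rank_update_neg_le_floor {p : ℕ} {x : Fin p → ℝ} {j : Fin p} {t : ℝ}
    (h : interPval x j ≤ t) : rank (update x j (-x j)) j ≤ ⌊p * t⌋₊ := by
  have hp : (0 : ℝ) < p := Nat.cast_pos.2 j.pos
  unfold interPval at h
  split_ifs at h with hj
  · have hcard : ({k | x k ≤ -x j} : Set (Fin p)).ncard = #{k | x k ≤ -x j} := by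
      rw [Set.ncard_eq_toFinset_card', Set.toFinset_ofPred]
    rw [hcard, div_le_iff₀ hp] at h
    rw [rank_update_neg x hj]
    exact Nat.le_floor (by push_cast; linarith)
  · calc rank (update x j (-x j)) j ≤ p := (card_filter_le _ _).trans (by simp)
      _ ≤ ⌊p * t⌋₊ := Nat.le_floor (by nlinarith)

lemma sum_measure_le_of_forall_card_le {X ι : Type*} [MeasurableSpace X] (ν : Measure X)
    (s : Finset ι) {A : ι → Set X} [∀ i, DecidablePred (· ∈ A i)]
    (hA : ∀ i ∈ s, MeasurableSet (A i)) {M : ℕ} (hM : ∀ x, #{i ∈ s | x ∈ A i} ≤ M) :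
    ∑ i ∈ s, ν (A i) ≤ M * ν Set.univ := by
  calc ∑ i ∈ s, ν (A i) = ∫⁻ x, ∑ i ∈ s, (A i).indicator 1 x ∂ν := by
        rw [lintegral_finsetSum s (f := fun i => (A i).indicator 1)
          fun i hi => measurable_const.indicator (hA i hi)]
        exact sum_congr rfl fun i hi => (lintegral_indicator_one (hA i hi)).symm
    _ ≤ ∫⁻ _, (M : ℝ≥0∞) ∂ν := lintegral_mono fun x => by
        simp only [Set.indicator_apply, Pi.one_apply, ← natCast_card_filter]
        exact_mod_cast hM x
    _ = M * ν Set.univ := lintegral_const _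

section Exchangeable

variable {ι α : Type*} [Fintype ι] [MeasurableSpace α] [LinearOrder α]

lemma measure_rank_le_eq (P₀ : Measure α) [SigmaFinite P₀] (M : ℕ) (i j : ι) :
    Measure.pi (fun _ : ι => P₀) {x | rank x i ≤ M}
      = Measure.pi (fun _ : ι => P₀) {x | rank x j ≤ M} := by
  classical
  have hσ := measurePreserving_arrowCongr' (fun _ : ι => P₀) (fun _ => P₀) (Equiv.swap i j)
    (MeasurableEquiv.refl α) fun _ => .id P₀
  rw [← hσ.measure_preimage_equiv {x | rank x j ≤ M}]
  congr 1
  ext x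
  change rank x i ≤ M ↔ rank (x ∘ (Equiv.swap i j).symm) j ≤ M
  rw [rank_comp_equiv, Equiv.symm_swap, Equiv.swap_apply_right]

variable [TopologicalSpace α] [OpensMeasurableSpace α] [OrderClosedTopology α]
  [SecondCountableTopology α]

lemma measurableSet_rank_le (M : ℕ) (i : ι) : MeasurableSet {x : ι → α | rank x i ≤ M} := by
  have : Measurable fun x : ι → α => rank x i := by
    simp_rw [rank, card_filter]
    exact Finset.measurable_sum _ fun k _ => Measurable.ite
      (measurableSet_le (measurable_pi_apply k) (measurable_pi_apply i)) measurable_const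
      measurable_const
  exact measurableSet_le this measurable_const

lemma measure_rank_le_le_div [Nonempty ι] (P₀ : Measure α) [IsProbabilityMeasure P₀] (M : ℕ)
    (j : ι) : Measure.pi (fun _ : ι => P₀) {x | rank x j ≤ M} ≤ M / Fintype.card ι := by
  rw [ENNReal.le_div_iff_mul_le (by simp) (by simp), mul_comm]
  calc (Fintype.card ι : ℝ≥0∞) * Measure.pi (fun _ : ι => P₀) {x | rank x j ≤ M}
      = ∑ i, Measure.pi (fun _ : ι => P₀) {x | rank x i ≤ M} := by
        simp [measure_rank_le_eq P₀ M _ j]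
    _ ≤ M * Measure.pi (fun _ : ι => P₀) Set.univ :=
        sum_measure_le_of_forall_card_le _ univ (fun i _ => measurableSet_rank_le M i)
          fun x => by simpa using card_rank_le_le x M
    _ = M := by simp

end Exchangeable

lemma measurePreserving_update_apply {ι α : Type*} [Fintype ι] [DecidableEq ι]
    [MeasurableSpace α] {P₀ : Measure α} [SigmaFinite P₀] {g : α → α}
    (hg : MeasurePreserving g P₀ P₀) (j : ι) :
    MeasurePreserving (fun x : ι → α => update x j (g (x j)))
      (Measure.pi fun _ => P₀) (Measure.pi fun _ => P₀) := by
  convert measurePreserving_pi (fun _ : ι => P₀) (fun _ => P₀)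
    (f := fun i => if i = j then g else id) fun i => by split_ifs; exacts [hg, .id P₀] using 1
  ext x i
  rcases eq_or_ne i j with rfl | hi <;> simp [*]

lemma kappa_denom_pos : 0 < 7 * Real.sqrt 22 - 32 := by
  nlinarith [Real.sq_sqrt (show (0 : ℝ) ≤ 22 by norm_num), Real.sqrt_nonneg 22]

lemma one_le_kappa : 1 ≤ (Real.sqrt 22 - 2) / (7 * Real.sqrt 22 - 32) := by
  rw [le_div_iff₀ kappa_denom_pos]
  nlinarith [Real.sq_sqrt (show (0 : ℝ) ≤ 22 by norm_num), Real.sqrt_nonneg 22]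

lemma kappa_le : (Real.sqrt 22 - 2) / (7 * Real.sqrt 22 - 32) ≤ 3.24 := by
  rw [div_le_iff₀ kappa_denom_pos]
  nlinarith [Real.sq_sqrt (show (0 : ℝ) ≤ 22 by norm_num), Real.sqrt_nonneg 22,
    sq_nonneg (21.68 * Real.sqrt 22 - 101.68)]

theorem stmt_6_general {Ω : Type*} [MeasurableSpace Ω] (μ : Measure Ω)
    [IsProbabilityMeasure μ] (p : ℕ)
    (W : Fin p → Ω → ℝ) (hW : ∀ i, Measurable (W i))
    (P₀ : Measure ℝ) [IsProbabilityMeasure P₀]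
    (hiid : iIndepFun W μ)
    (hlaw : ∀ i, μ.map (W i) = P₀)
    (hsym : P₀.map (fun x => -x) = P₀)
    (j : Fin p) (t : ℝ) (ht0 : 0 ≤ t) :
    μ {ω | interPval (fun i => W i ω) j ≤ t} ≤
      ENNReal.ofReal ((Real.sqrt 22 - 2) / (7 * Real.sqrt 22 - 32) * t) ∧
    (Real.sqrt 22 - 2) / (7 * Real.sqrt 22 - 32) ≤ 3.24 := by
  refine ⟨?_, kappa_le⟩
  have : Nonempty (Fin p) := ⟨j⟩
  set M := ⌊p * t⌋₊
  have hlaw_vec : MeasurePreserving (fun ω i => W i ω) μ (Measure.pi fun _ => P₀) :=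
    ⟨measurable_pi_lambda _ hW,
      by simp [hiid.map_fun_eq_pi_map fun i => (hW i).aemeasurable, hlaw]⟩
  have hflip := (measurePreserving_update_apply ⟨measurable_neg, hsym⟩ j).comp hlaw_vec
  calc μ {ω | interPval (fun i => W i ω) j ≤ t}
      ≤ μ ((fun ω => update (fun i => W i ω) j (-W j ω)) ⁻¹' {x | rank x j ≤ M}) :=
        measure_mono fun ω hω => rank_update_neg_le_floor hω
    _ = Measure.pi (fun _ => P₀) {x | rank x j ≤ M} :=
        hflip.measure_preimage (measurableSet_rank_le M j).nullMeasurableSet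
    _ ≤ M / p := by simpa using measure_rank_le_le_div P₀ M j
    _ ≤ ENNReal.ofReal t := by
        rw [ENNReal.div_le_iff (by simp [j.pos.ne']) (by simp), ← ENNReal.ofReal_natCast,
          ← ENNReal.ofReal_natCast, ← ENNReal.ofReal_mul ht0, mul_comm t]
        exact ENNReal.ofReal_le_ofReal (Nat.floor_le (by positivity))
    _ ≤ _ := ENNReal.ofReal_le_ofReal (le_mul_of_one_le_left ht0 one_le_kappa)

/-- Intermediate p-value bound (all-null case): if `W_1, ..., W_p` are i.i.d. with a
common distribution `P₀` symmetric about `0` and `p ≥ 2`, then for all `t ∈ [0,1]`,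
`P(π_j ≤ t) ≤ κ t`, where `κ = (√22 - 2)/(7√22 - 32) ≤ 3.24`. -/
theorem stmt_6 {Ω : Type*} [MeasurableSpace Ω] (μ : Measure Ω)
    [IsProbabilityMeasure μ] (p : ℕ) (hp : 2 ≤ p)
    (W : Fin p → Ω → ℝ) (hW : ∀ i, Measurable (W i))
    (P₀ : Measure ℝ) [IsProbabilityMeasure P₀]
    (hiid : iIndepFun W μ)
    (hlaw : ∀ i, μ.map (W i) = P₀)
    (hsym : P₀.map (fun x => -x) = P₀)
    (j : Fin p) (t : ℝ) (ht0 : 0 ≤ t) (ht1 : t ≤ 1) :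
    μ {ω | interPval (fun i => W i ω) j ≤ t} ≤
      ENNReal.ofReal ((Real.sqrt 22 - 2) / (7 * Real.sqrt 22 - 32) * t) ∧
    (Real.sqrt 22 - 2) / (7 * Real.sqrt 22 - 32) ≤ 3.24 :=
  stmt_6_general μ p W hW P₀ hiid hlaw hsym j t ht0
end

section
/- Let (π_j^{(b)})_{j∈[p],b∈[B]} be [0,1]-valued random variables, γ ∈ (0,1], ᾱ ∈ [0,1], and N ⊆ [p]. Define Q_j = (p/γ) q_γ({π_j^{(b)}}_b), ĥ = max{i : Q_{(i)} ≤ i ᾱ} (with Q_{(1)} ≤ ... ≤ Q_{(p)}), and Ŝ = {j : Q_j ≤ Q_{(ĥ)}}. If there exists C ≥ 0 such that P(π_i^{(b)} ≤ t) ≤ C t for all t ≥ 0, all b ∈ [B], and all i ∈ N, then E[|Ŝ ∩ N| / max(|Ŝ|,1)] ≤ (|N| C / p) (Σ_{j=1}^p 1/j) ᾱ. -/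
/-!
Every rejected `j` satisfies `Q_j ≤ |Ŝ| ᾱ` (self-consistency of the step-up set), so the false
discovery proportion is at most `∑_{j ∈ N} 1{Q_j ≤ R ᾱ} / R` with `R = |Ŝ| ∈ [1, p]`. Uniformly in
`R`, each summand is dominated by a fixed nonnegative combination of the indicators
`1{Q_j ≤ k ᾱ}`, `k ≤ p`, which removes the dependence between `Q_j` and `R`. For `j ∈ N`,
Markov's inequality applied to the number of `b` with `π_j^{(b)} ≤ γ t / p` gives
`P(Q_j ≤ t) ≤ C t / p`, and the weights of the combination add up to the harmonic sum.
-/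

open MeasureTheory

/-- Empirical `γ`-quantile of the finite family `v : Fin B → ℝ`:
`q_γ(v) = inf {x : #{b : v b ≤ x} ≥ γ B}` (the `⌈γB⌉`-th smallest value). -/
noncomputable def quantileGamma {B : ℕ} (γ : ℝ) (v : Fin B → ℝ) : ℝ :=
  sInf {x : ℝ | γ * B ≤ (({b | v b ≤ x} : Set (Fin B)).ncard : ℝ)}

lemma ncard_setOf_le_eq_sum_indicator {ι : Type*} [Fintype ι] (v : ι → ℝ) (x : ℝ) :
    (({i | v i ≤ x} : Set ι).ncard : ℝ) = ∑ i, (Set.Ici (v i)).indicator 1 x := by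
  classical
  rw [Set.ncard_eq_toFinset_card', Set.toFinset_ofPred, Finset.natCast_card_filter]
  simp [Set.indicator_apply]

lemma isClosed_setOf_le_ncard {ι : Type*} [Fintype ι] (c : ℝ) (v : ι → ℝ) :
    IsClosed {x : ℝ | c ≤ (({i | v i ≤ x} : Set ι).ncard : ℝ)} := by
  simp_rw [ncard_setOf_le_eq_sum_indicator]
  exact (upperSemicontinuous_sum fun i _ =>
    isClosed_Ici.upperSemicontinuous_indicator zero_le_one).isClosed_preimage c

section QuantileGamma

variable {B : ℕ} {γ : ℝ}

lemma quantileGamma_le_iff (hB : 1 ≤ B) (hγ0 : 0 < γ) (hγ1 : γ ≤ 1) (v : Fin B → ℝ) (s : ℝ) :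
    quantileGamma γ v ≤ s ↔ γ * B ≤ (({b | v b ≤ s} : Set (Fin B)).ncard : ℝ) := by
  set S := {x : ℝ | γ * B ≤ (({b | v b ≤ x} : Set (Fin B)).ncard : ℝ)}
  have hmono : Monotone fun x => (({b | v b ≤ x} : Set (Fin B)).ncard : ℝ) := fun x y hxy =>
    Nat.mono_cast (Set.ncard_le_ncard fun b (hb : v b ≤ x) => hb.trans hxy)
  have hne : S.Nonempty := by
    obtain ⟨M, hM⟩ := (Set.finite_range v).bddAbove
    refine ⟨M, ?_⟩
    have : ({b | v b ≤ M} : Set (Fin B)) = Set.univ :=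
      Set.eq_univ_of_forall fun b => hM (Set.mem_range_self b)
    simp only [S, Set.mem_ofPred_eq, this, Set.ncard_univ, Nat.card_eq_fintype_card,
      Fintype.card_fin]
    exact mul_le_of_le_one_left (Nat.cast_nonneg B) hγ1
  have hbdd : BddBelow S := by
    obtain ⟨m, hm⟩ := (Set.finite_range v).bddBelow
    refine ⟨m, fun x hx => not_lt.mp fun hxm => ?_⟩
    have : ({b | v b ≤ x} : Set (Fin B)) = ∅ :=
      Set.eq_empty_of_forall_notMem fun b hb => (hxm.trans_le (hm (Set.mem_range_self b))).not_ge hb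
    have hB' : (0 : ℝ) < B := by exact_mod_cast hB
    simp only [S, Set.mem_ofPred_eq, this, Set.ncard_empty, Nat.cast_zero] at hx
    nlinarith
  refine ⟨fun hs => ?_, fun hs => csInf_le hbdd hs⟩
  exact ((isClosed_setOf_le_ncard _ v).csInf_mem hne hbdd).trans (hmono hs)

lemma quantileGamma_le_iff_le_sum_indicator {Ω : Type*} (hB : 1 ≤ B) (hγ0 : 0 < γ) (hγ1 : γ ≤ 1)
    (f : Fin B → Ω → ℝ) (s : ℝ) (ω : Ω) :
    quantileGamma γ (fun b => f b ω) ≤ s ↔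
      γ * B ≤ ∑ b, {ω' | f b ω' ≤ s}.indicator (fun _ => (1 : ℝ)) ω := by
  rw [quantileGamma_le_iff hB hγ0 hγ1, ncard_setOf_le_eq_sum_indicator]
  simp [Set.indicator_apply]

variable {Ω : Type*} [MeasurableSpace Ω]

lemma measurable_quantileGamma (hB : 1 ≤ B) (hγ0 : 0 < γ) (hγ1 : γ ≤ 1)
    {f : Fin B → Ω → ℝ} (hf : ∀ b, Measurable (f b)) :
    Measurable fun ω => quantileGamma γ (fun b => f b ω) := by
  refine measurable_of_Iic fun s => ?_
  simp_rw [Set.preimage, Set.mem_Iic, quantileGamma_le_iff_le_sum_indicator hB hγ0 hγ1]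
  exact measurableSet_le measurable_const (Finset.measurable_sum _ fun b _ =>
    measurable_const.indicator (measurableSet_le (hf b) measurable_const))

-- Markov's inequality for `#{b | f b ω ≤ s}`, whose expectation is at most `B ε`.
lemma measureReal_quantileGamma_le (hB : 1 ≤ B) (hγ0 : 0 < γ) (hγ1 : γ ≤ 1)
    (μ : Measure Ω) [IsFiniteMeasure μ] {f : Fin B → Ω → ℝ} (hf : ∀ b, Measurable (f b))
    {s ε : ℝ} (hε : ∀ b, μ.real {ω | f b ω ≤ s} ≤ ε) :
    μ.real {ω | quantileGamma γ (fun b => f b ω) ≤ s} ≤ ε / γ := by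
  have hsets : ∀ b, MeasurableSet {ω | f b ω ≤ s} := fun b =>
    measurableSet_le (hf b) measurable_const
  have hint : Integrable (fun ω => ∑ b, {ω' | f b ω' ≤ s}.indicator (fun _ => (1 : ℝ)) ω) μ :=
    integrable_finsetSum _ fun b _ => (integrable_const 1).indicator (hsets b)
  have hmarkov := mul_meas_ge_le_integral_of_nonneg (ae_of_all μ fun ω =>
    Finset.sum_nonneg fun b _ => Set.indicator_nonneg (fun _ _ => zero_le_one) ω) hint (γ * B)
  rw [integral_finsetSum _ fun b _ => (integrable_const 1).indicator (hsets b)] at hmarkov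
  simp only [integral_indicator_const _ (hsets _), smul_eq_mul, mul_one] at hmarkov
  have hsum : ∑ b, μ.real {ω | f b ω ≤ s} ≤ B * ε := by
    simpa using Finset.sum_le_sum fun b (_ : b ∈ Finset.univ) => hε b
  have hB' : (0 : ℝ) < B := by exact_mod_cast hB
  simp_rw [quantileGamma_le_iff_le_sum_indicator hB hγ0 hγ1]
  rw [le_div_iff₀ hγ0]
  nlinarith

lemma measureReal_mul_quantileGamma_le (hB : 1 ≤ B) (hγ0 : 0 < γ) (hγ1 : γ ≤ 1)
    (μ : Measure Ω) [IsFiniteMeasure μ] {f : Fin B → Ω → ℝ} (hf : ∀ b, Measurable (f b))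
    {κ C t : ℝ} (hκ : 0 < κ) (ht : 0 ≤ t)
    (hcdf : ∀ s, 0 ≤ s → ∀ b, μ.real {ω | f b ω ≤ s} ≤ C * s) :
    μ.real {ω | κ * quantileGamma γ (fun b => f b ω) ≤ t} ≤ C * t / (κ * γ) := by
  have hset : {ω | κ * quantileGamma γ (fun b => f b ω) ≤ t} =
      {ω | quantileGamma γ (fun b => f b ω) ≤ t / κ} := by
    ext ω
    rw [Set.mem_ofPred_eq, Set.mem_ofPred_eq, le_div_iff₀ hκ, mul_comm]
  rw [hset, mul_div_assoc, ← div_div, ← mul_div_assoc]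
  exact measureReal_quantileGamma_le hB hγ0 hγ1 μ hf fun b => hcdf _ (by positivity) b

end QuantileGamma

/-- Since `1 / V = ∑_{k=V}^p 1/(k(k+1)) + 1/(p+1)`, this dominates `u ↦ 1{u ≤ V a} / V`
simultaneously for all `1 ≤ V ≤ p`. -/
noncomputable def harmonicWeight (p : ℕ) (a u : ℝ) : ℝ :=
  ∑ k ∈ Finset.Icc 1 p, (Set.Iic ((k : ℝ) * a)).indicator (fun _ => 1 / ((k : ℝ) * (k + 1))) u +
    (Set.Iic ((p : ℝ) * a)).indicator (fun _ => 1 / ((p : ℝ) + 1)) u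

lemma sum_Icc_one_div_mul_succ {V p : ℕ} (hV : 1 ≤ V) (hVp : V ≤ p + 1) :
    ∑ k ∈ Finset.Icc V p, 1 / ((k : ℝ) * (k + 1)) = 1 / V - 1 / (p + 1) := by
  rw [← Finset.Ico_add_one_right_eq_Icc]
  calc ∑ k ∈ Finset.Ico V (p + 1), 1 / ((k : ℝ) * (k + 1))
      = ∑ k ∈ Finset.Ico V (p + 1), (-1 / ((k + 1 : ℕ) : ℝ) - -1 / (k : ℝ)) := by
        refine Finset.sum_congr rfl fun k hk => ?_
        have hk0 : (0 : ℝ) < k := Nat.cast_pos.mpr (hV.trans (Finset.mem_Ico.mp hk).1)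
        push_cast
        field_simp
        ring
    _ = 1 / V - 1 / (p + 1) := by
        rw [Finset.sum_Ico_sub (fun k => -1 / (k : ℝ)) hVp]
        push_cast
        ring

lemma sum_Icc_one_div_succ_add_div_succ (p : ℕ) :
    ∑ k ∈ Finset.Icc 1 p, 1 / ((k : ℝ) + 1) + p / (p + 1) = ∑ k ∈ Finset.Icc 1 p, 1 / (k : ℝ) := by
  induction p with
  | zero => simp
  | succ p ih =>
    rw [Finset.sum_Icc_succ_top (by omega), Finset.sum_Icc_succ_top (by omega), ← ih]
    push_cast
    field_simp
    ring

lemma harmonicWeight_nonneg (p : ℕ) (a u : ℝ) : 0 ≤ harmonicWeight p a u :=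
  add_nonneg (Finset.sum_nonneg fun k _ => Set.indicator_nonneg (fun _ _ => by positivity) u)
    (Set.indicator_nonneg (fun _ _ => by positivity) u)

lemma one_div_le_harmonicWeight {p V : ℕ} {a u : ℝ} (ha : 0 ≤ a) (hV : 1 ≤ V) (hVp : V ≤ p)
    (hu : u ≤ V * a) : 1 / (V : ℝ) ≤ harmonicWeight p a u := by
  have hle : ∀ k : ℕ, V ≤ k → u ≤ k * a := fun k hk =>
    hu.trans (mul_le_mul_of_nonneg_right (by exact_mod_cast hk) ha)
  calc 1 / (V : ℝ)
      = ∑ k ∈ Finset.Icc V p, 1 / ((k : ℝ) * (k + 1)) + 1 / ((p : ℝ) + 1) := by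
        rw [sum_Icc_one_div_mul_succ hV (by omega)]
        ring
    _ = ∑ k ∈ Finset.Icc V p,
          (Set.Iic ((k : ℝ) * a)).indicator (fun _ => 1 / ((k : ℝ) * (k + 1))) u +
          (Set.Iic ((p : ℝ) * a)).indicator (fun _ => 1 / ((p : ℝ) + 1)) u := by
        rw [Set.indicator_of_mem (Set.mem_Iic.mpr (hle p hVp))]
        congr 1
        exact Finset.sum_congr rfl fun k hk => by
          rw [Set.indicator_of_mem (Set.mem_Iic.mpr (hle k (Finset.mem_Icc.mp hk).1))]
    _ ≤ harmonicWeight p a u :=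
        add_le_add_left (Finset.sum_le_sum_of_subset_of_nonneg (Finset.Icc_subset_Icc_left hV)
          fun k _ _ => Set.indicator_nonneg (fun _ _ => by positivity) u) _

lemma indicator_Iic_comp_eq {Ω : Type*} (U : Ω → ℝ) (x d : ℝ) :
    (fun ω => (Set.Iic x).indicator (fun _ => d) (U ω)) = {ω | U ω ≤ x}.indicator fun _ => d :=
  funext fun _ => (Set.indicator_comp_right U).symm

section Integral

variable {Ω : Type*} [MeasurableSpace Ω] {μ : Measure Ω} [IsFiniteMeasure μ] {U : Ω → ℝ}

lemma integrable_indicator_Iic_comp (hU : Measurable U) (x d : ℝ) :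
    Integrable (fun ω => (Set.Iic x).indicator (fun _ => d) (U ω)) μ := by
  rw [indicator_Iic_comp_eq]
  exact (integrable_const d).indicator (measurableSet_le hU measurable_const)

lemma integrable_harmonicWeight_comp (hU : Measurable U) (p : ℕ) (a : ℝ) :
    Integrable (fun ω => harmonicWeight p a (U ω)) μ :=
  (integrable_finsetSum _ fun _ _ => integrable_indicator_Iic_comp hU _ _).add
    (integrable_indicator_Iic_comp hU _ _)

lemma integral_harmonicWeight_comp_le (hU : Measurable U) (p : ℕ) {a c : ℝ} (ha : 0 ≤ a)
    (hcdf : ∀ t, 0 ≤ t → μ.real {ω | U ω ≤ t} ≤ c * t) :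
    ∫ ω, harmonicWeight p a (U ω) ∂μ ≤ c * a * ∑ k ∈ Finset.Icc 1 p, 1 / (k : ℝ) := by
  have hterm : ∀ x d : ℝ, 0 ≤ x → 0 ≤ d →
      ∫ ω, (Set.Iic x).indicator (fun _ => d) (U ω) ∂μ ≤ c * x * d := fun x d hx hd => by
    rw [indicator_Iic_comp_eq, integral_indicator_const _ (measurableSet_le hU measurable_const),
      smul_eq_mul]
    exact mul_le_mul_of_nonneg_right (hcdf x hx) hd
  unfold harmonicWeight
  rw [integral_add (integrable_finsetSum _ fun _ _ => integrable_indicator_Iic_comp hU _ _)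
    (integrable_indicator_Iic_comp hU _ _), integral_finsetSum _
    fun _ _ => integrable_indicator_Iic_comp hU _ _]
  calc _ ≤ ∑ k ∈ Finset.Icc 1 p, c * (k * a) * (1 / ((k : ℝ) * (k + 1))) +
        c * (p * a) * (1 / ((p : ℝ) + 1)) :=
        add_le_add (Finset.sum_le_sum fun k _ => hterm _ _ (by positivity) (by positivity))
          (hterm _ _ (by positivity) (by positivity))
    _ = c * a * (∑ k ∈ Finset.Icc 1 p, 1 / ((k : ℝ) + 1) + p / (p + 1)) := by
        rw [mul_add, Finset.mul_sum]
        congr 1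
        · refine Finset.sum_congr rfl fun k hk => ?_
          have hk0 : (k : ℝ) ≠ 0 := Nat.cast_ne_zero.mpr (by grind)
          field_simp
        · field_simp
    _ = c * a * ∑ k ∈ Finset.Icc 1 p, 1 / (k : ℝ) := by
        rw [sum_Icc_one_div_succ_add_div_succ]

end Integral

def stepUpSet {ι : Type*} (p : ℕ) (a : ℝ) (Q : ι → ℝ) : Set ι :=
  {j | ∃ i : ℕ, 1 ≤ i ∧ i ≤ p ∧ (i : ℝ) ≤ (({j' | Q j' ≤ i * a} : Set ι).ncard : ℝ) ∧ Q j ≤ i * a}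

section StepUp

variable {ι : Type*} [Finite ι] {p : ℕ} {a : ℝ} {Q : ι → ℝ}

lemma le_ncard_mul_of_mem_stepUpSet (ha : 0 ≤ a) {j : ι} (hj : j ∈ stepUpSet p a Q) :
    Q j ≤ (stepUpSet p a Q).ncard * a := by
  obtain ⟨i, hi1, hip, hcount, hQj⟩ := hj
  have hsub : {j' | Q j' ≤ i * a} ⊆ stepUpSet p a Q := fun j' hj' => ⟨i, hi1, hip, hcount, hj'⟩
  have hi : (i : ℝ) ≤ (stepUpSet p a Q).ncard :=
    hcount.trans (by exact_mod_cast Set.ncard_le_ncard hsub)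
  exact hQj.trans (mul_le_mul_of_nonneg_right hi ha)

lemma ncard_inter_div_le_sum_harmonicWeight (hp : Nat.card ι ≤ p) {S : Set ι} (N : Finset ι)
    (ha : 0 ≤ a) (hS : ∀ j ∈ S, Q j ≤ S.ncard * a) :
    ((S ∩ ↑N).ncard : ℝ) / max (S.ncard : ℝ) 1 ≤ ∑ j ∈ N, harmonicWeight p a (Q j) := by
  classical
  have hSN : S ∩ ↑N = ↑(N.filter (· ∈ S)) := by ext; simp [and_comm]
  rw [hSN, Set.ncard_coe_finset]
  calc ((N.filter (· ∈ S)).card : ℝ) / max (S.ncard : ℝ) 1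
      = ∑ j ∈ N.filter (· ∈ S), 1 / max (S.ncard : ℝ) 1 := by
        rw [Finset.sum_const, nsmul_eq_mul]
        ring
    _ ≤ ∑ j ∈ N.filter (· ∈ S), harmonicWeight p a (Q j) := Finset.sum_le_sum fun j hj => by
        have hjS : j ∈ S := (Finset.mem_filter.mp hj).2
        have hS1 : 1 ≤ S.ncard := (Set.ncard_pos S.toFinite).mpr ⟨j, hjS⟩
        rw [max_eq_left (by exact_mod_cast hS1)]
        exact one_div_le_harmonicWeight ha hS1 ((Set.ncard_le_card S).trans hp) (hS j hjS)
    _ ≤ ∑ j ∈ N, harmonicWeight p a (Q j) :=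
        Finset.sum_le_sum_of_subset_of_nonneg (Finset.filter_subset _ _)
          fun j _ _ => harmonicWeight_nonneg p a (Q j)

end StepUp

theorem stmt_10_general {Ω : Type*} [MeasurableSpace Ω] (μ : Measure Ω)
    [IsProbabilityMeasure μ] (p B : ℕ) (hB : 1 ≤ B)
    (γ : ℝ) (hγ0 : 0 < γ) (hγ1 : γ ≤ 1) (abar : ℝ) (habar : abar ∈ Set.Icc (0:ℝ) 1)
    (π : Fin p → Fin B → Ω → ℝ) (hmeas : ∀ j b, Measurable (π j b))
    (N : Set (Fin p)) (C : ℝ)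
    (hcond : ∀ t : ℝ, 0 ≤ t → ∀ b : Fin B, ∀ i ∈ N,
      (μ {ω | π i b ω ≤ t}).toReal ≤ C * t) :
    let Q : Fin p → Ω → ℝ := fun j ω =>
      ((p : ℝ) / γ) * quantileGamma γ (fun b => π j b ω)
    let Shat : Ω → Set (Fin p) := fun ω =>
      {j | ∃ i : ℕ, 1 ≤ i ∧ i ≤ p ∧
        (i : ℝ) ≤ (({j' | Q j' ω ≤ i * abar} : Set (Fin p)).ncard : ℝ) ∧
        Q j ω ≤ i * abar}
    ∫ ω, (((Shat ω ∩ N).ncard : ℝ) / max ((Shat ω).ncard : ℝ) 1) ∂μ ≤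
      ((N.ncard : ℝ) * C / p) * (∑ j ∈ Finset.Icc 1 p, (1 / (j : ℝ))) * abar := by
  intro Q Shat
  obtain ⟨N, rfl⟩ := N.toFinite.exists_finset_coe
  have hQ_meas : ∀ j, Measurable (Q j) := fun j =>
    (measurable_quantileGamma hB hγ0 hγ1 (hmeas j)).const_mul _
  have hQ_cdf : ∀ j ∈ N, ∀ t, 0 ≤ t → μ.real {ω | Q j ω ≤ t} ≤ C / p * t := fun j hj t ht => by
    have hp0 : (0 : ℝ) < p := Nat.cast_pos.mpr j.pos
    refine (measureReal_mul_quantileGamma_le hB hγ0 hγ1 μ (hmeas j) (div_pos hp0 hγ0) ht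
      fun s hs b => hcond s hs b j hj).trans_eq ?_
    field_simp
  have hfdp : ∀ ω, ((Shat ω ∩ ↑N).ncard : ℝ) / max ((Shat ω).ncard : ℝ) 1 ≤
      ∑ j ∈ N, harmonicWeight p abar (Q j ω) := fun ω =>
    ncard_inter_div_le_sum_harmonicWeight (S := stepUpSet p abar (Q · ω)) (by simp) N habar.1
      fun _ hj => le_ncard_mul_of_mem_stepUpSet habar.1 hj
  calc ∫ ω, ((Shat ω ∩ ↑N).ncard : ℝ) / max ((Shat ω).ncard : ℝ) 1 ∂μ
      ≤ ∫ ω, ∑ j ∈ N, harmonicWeight p abar (Q j ω) ∂μ :=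
        integral_mono_of_nonneg (ae_of_all _ fun ω => by positivity)
          (integrable_finsetSum _ fun j _ => integrable_harmonicWeight_comp (hQ_meas j) p abar)
          (ae_of_all _ hfdp)
    _ = ∑ j ∈ N, ∫ ω, harmonicWeight p abar (Q j ω) ∂μ :=
        integral_finsetSum _ fun j _ => integrable_harmonicWeight_comp (hQ_meas j) p abar
    _ ≤ ∑ j ∈ N, C / p * abar * ∑ k ∈ Finset.Icc 1 p, 1 / (k : ℝ) :=
        Finset.sum_le_sum fun j hj =>
          integral_harmonicWeight_comp_le (hQ_meas j) p habar.1 (hQ_cdf j hj)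
    _ = _ := by
        rw [Finset.sum_const, nsmul_eq_mul, Set.ncard_coe_finset]
        ring

/-- General FDR control for the BY-type step-up procedure applied to
quantile-aggregated p-values (Lemma A of the paper).  With
`Q_j = (p/γ) q_γ({π_j^{(b)}}_b)`, `ĥ = max{i : Q_{(i)} ≤ i ᾱ}` and
`Ŝ = {j : Q_j ≤ Q_{(ĥ)}}`, written equivalently (step-up form) as
`Ŝ = {j | ∃ i ∈ [1,p], #{j' : Q_{j'} ≤ i ᾱ} ≥ i ∧ Q_j ≤ i ᾱ}`: if
`P(π_i^{(b)} ≤ t) ≤ C t` for all `t ≥ 0`, `b ∈ [B]`, `i ∈ N`, then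
`E[|Ŝ ∩ N| / max(|Ŝ|,1)] ≤ (|N| C / p) (Σ_{j=1}^p 1/j) ᾱ`. -/
theorem stmt_10 {Ω : Type*} [MeasurableSpace Ω] (μ : Measure Ω)
    [IsProbabilityMeasure μ] (p B : ℕ) (hp : 1 ≤ p) (hB : 1 ≤ B)
    (γ : ℝ) (hγ0 : 0 < γ) (hγ1 : γ ≤ 1) (abar : ℝ) (habar : abar ∈ Set.Icc (0:ℝ) 1)
    (π : Fin p → Fin B → Ω → ℝ) (hmeas : ∀ j b, Measurable (π j b))
    (hrange : ∀ j b ω, π j b ω ∈ Set.Icc (0:ℝ) 1)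
    (N : Set (Fin p)) (C : ℝ) (hC : 0 ≤ C)
    (hcond : ∀ t : ℝ, 0 ≤ t → ∀ b : Fin B, ∀ i ∈ N,
      (μ {ω | π i b ω ≤ t}).toReal ≤ C * t) :
    let Q : Fin p → Ω → ℝ := fun j ω =>
      ((p : ℝ) / γ) * quantileGamma γ (fun b => π j b ω)
    let Shat : Ω → Set (Fin p) := fun ω =>
      {j | ∃ i : ℕ, 1 ≤ i ∧ i ≤ p ∧
        (i : ℝ) ≤ (({j' | Q j' ω ≤ i * abar} : Set (Fin p)).ncard : ℝ) ∧
        Q j ω ≤ i * abar}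
    ∫ ω, (((Shat ω ∩ N).ncard : ℝ) / max ((Shat ω).ncard : ℝ) 1) ∂μ ≤
      ((N.ncard : ℝ) * C / p) * (∑ j ∈ Finset.Icc 1 p, (1 / (j : ℝ))) * abar :=
  stmt_10_general μ p B hB γ hγ0 hγ1 abar habar π hmeas N C hcond
end

section
/- Let X ∈ ℝ^{n×q}, β* ∈ ℝ^q, λ > 0, and ε a random vector in ℝ^n whose distribution's support is not contained in any affine hyperplane (e.g., nondegenerate Gaussian N(0, σ²I_n)). Set y = Xβ* + ε. Fix α ∈ ℝ^q \ {0}. Then the event that: the Lasso minimizer β̂ of ||y - Xβ||²₂ + λ||β||₁ is unique with X restricted to the equicorrelation set Ĵ_λ having rank |Ĵ_λ|, αᵀβ̂ = 0, and α_j β̂_j ≠ 0 for some j, has probability zero. -/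
/-!
By the KKT conditions the Lasso solution `β̂` vanishes off the equicorrelation set `J = Ĵ_λ`, and
`X_Jᵀ (y - X β̂) = (λ/2) z` with `z` the sign pattern of the correlations. If `X_J` has full column
rank, put `u = (X_Jᵀ X_J)⁻¹ α_J` and `w = X_J u`; then
`wᵀ y = uᵀ (X_Jᵀ X_J β̂_J + (λ/2) z) = αᵀ β̂ + (λ/2) uᵀ z = (λ/2) uᵀ z`.
So `ε` lies on the affine hyperplane `wᵀ ε = (λ/2) uᵀ z - wᵀ X β*`, which depends only on `(J, z)`,
and `w ≠ 0` because `X_Jᵀ w = α_J` and `α_j ≠ 0` for some `j ∈ J`. There are finitely many pairs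
`(J, z)` and the noise charges no hyperplane.
-/

open MeasureTheory Matrix
open scoped Classical

theorem Fintype.sum_subtype_eq_sum_of_eq_zero {ι M : Type*} [Fintype ι] [AddCommMonoid M]
    {s : Set ι} {f : ι → M} (hf : ∀ i ∉ s, f i = 0) : ∑ i : s, f i = ∑ i, f i := by
  rw [← Fintype.sum_subtype_add_sum_subtype (· ∈ s) f,
    Fintype.sum_eq_zero (fun i : {i // i ∉ s} => f i) fun i => hf i i.2, add_zero]

abbrev Matrix.submatrixCols {m ι R : Type*} (X : Matrix m ι R) (J : Set ι) : Matrix m J R :=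
  X.submatrix id (↑)

namespace Matrix

variable {m κ K : Type*} [Fintype m] [Fintype κ] [DecidableEq κ] [Field K]

theorem isUnit_of_rank_eq_card {A : Matrix κ κ K} (h : A.rank = Fintype.card κ) : IsUnit A := by
  rw [← mulVec_surjective_iff_isUnit, ← coe_mulVecLin, ← LinearMap.range_eq_top]
  exact Submodule.eq_top_of_finrank_eq (by rw [← rank, h, Module.finrank_fintype_fun_eq_card])

theorem isUnit_transpose_mul_self_of_rank_eq_card {A : Matrix m κ ℝ}
    (h : A.rank = Fintype.card κ) : IsUnit (Aᵀ * A) :=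
  isUnit_of_rank_eq_card (by rw [rank_transpose_mul_self, h])

variable {A : Matrix m κ ℝ}

theorem transpose_mulVec_mulVec_inv_mulVec (hA : IsUnit (Aᵀ * A)) (a : κ → ℝ) :
    Aᵀ *ᵥ (A *ᵥ ((Aᵀ * A)⁻¹ *ᵥ a)) = a := by
  rw [mulVec_mulVec, mulVec_mulVec, mul_nonsing_inv _ ((isUnit_iff_isUnit_det _).mp hA),
    one_mulVec]

theorem mulVec_inv_mulVec_dotProduct_of_transpose_mulVec_eq (hA : IsUnit (Aᵀ * A))
    {a b g : κ → ℝ} {y : m → ℝ} (hab : a ⬝ᵥ b = 0) (hy : Aᵀ *ᵥ y = (Aᵀ * A) *ᵥ b + g) :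
    (A *ᵥ ((Aᵀ * A)⁻¹ *ᵥ a)) ⬝ᵥ y = ((Aᵀ * A)⁻¹ *ᵥ a) ⬝ᵥ g := by
  set u := (Aᵀ * A)⁻¹ *ᵥ a
  have hsymm : (Aᵀ * A)ᵀ = Aᵀ * A := by rw [transpose_mul, transpose_transpose]
  calc (A *ᵥ u) ⬝ᵥ y = u ⬝ᵥ (Aᵀ *ᵥ y) := by
        rw [dotProduct_comm, dotProduct_mulVec, mulVec_transpose, dotProduct_comm]
    _ = ((Aᵀ * A) *ᵥ u) ⬝ᵥ b + u ⬝ᵥ g := by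
        rw [hy, dotProduct_add, dotProduct_mulVec, ← mulVec_transpose, hsymm]
    _ = u ⬝ᵥ g := by
        rw [← mulVec_mulVec, transpose_mulVec_mulVec_inv_mulVec hA, hab, zero_add]

theorem mulVec_inv_mulVec_ne_zero (hA : IsUnit (Aᵀ * A)) {a : κ → ℝ} (ha : a ≠ 0) :
    A *ᵥ ((Aᵀ * A)⁻¹ *ᵥ a) ≠ 0 := fun h =>
  ha (by rw [← transpose_mulVec_mulVec_inv_mulVec hA a, h, mulVec_zero])

end Matrix

namespace Lasso

variable {m ι : Type*} [Fintype m] [Fintype ι]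

noncomputable def objective (X : Matrix m ι ℝ) (y : m → ℝ) (lam : ℝ) (β : ι → ℝ) : ℝ :=
  ∑ i, (y i - (X *ᵥ β) i) ^ 2 + lam * ∑ j, |β j|

def correlation (X : Matrix m ι ℝ) (y : m → ℝ) (β : ι → ℝ) : ι → ℝ :=
  Xᵀ *ᵥ (y - X *ᵥ β)

def equicorrelationSet (X : Matrix m ι ℝ) (y : m → ℝ) (lam : ℝ) (β : ι → ℝ) : Set ι :=
  {j | |correlation X y β j| = lam / 2}

theorem hasDerivAt_objective_add_single [DecidableEq ι] (X : Matrix m ι ℝ) (y : m → ℝ)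
    (lam : ℝ) {β : ι → ℝ} {j : ι} (hj : β j ≠ 0) :
    HasDerivAt (fun t : ℝ => objective X y lam (β + Pi.single j t))
      (-2 * correlation X y β j + lam * SignType.sign (β j)) 0 := by
  have hres (i : m) : HasDerivAt (fun t : ℝ => ((y - X *ᵥ β) i - X i j * t) ^ 2)
      (-2 * (X i j * (y - X *ᵥ β) i)) 0 :=
    ((((hasDerivAt_id' (0 : ℝ)).const_mul (X i j)).const_sub ((y - X *ᵥ β) i)).fun_pow
      2).congr_deriv (by ring)
  have habs (k : ι) : HasDerivAt (fun t : ℝ => |β k + (Pi.single j t : ι → ℝ) k|)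
      ((Pi.single j (SignType.sign (β j) : ℝ) : ι → ℝ) k) 0 := by
    by_cases hk : k = j
    · subst hk
      rw [← add_zero (β k)] at hj
      simpa using (hasDerivAt_abs hj).comp_const_add (β k) 0
    · simpa [hk] using hasDerivAt_const (0 : ℝ) |β k|
  have hline : (fun t : ℝ => objective X y lam (β + Pi.single j t)) = fun t =>
      ∑ i, ((y - X *ᵥ β) i - X i j * t) ^ 2 + lam * ∑ k, |β k + (Pi.single j t : ι → ℝ) k| := by
    ext t
    simp [objective, mulVec_add, sub_add_eq_sub_sub, mul_comm]
  rw [hline]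
  refine ((HasDerivAt.fun_sum fun i _ => hres i).add
    ((HasDerivAt.fun_sum fun k _ => habs k).const_mul lam)).congr_deriv ?_
  simp [correlation, mulVec, dotProduct, Finset.mul_sum]

section

variable {X : Matrix m ι ℝ} {y : m → ℝ} {lam : ℝ} {α β : ι → ℝ} {J : Set ι}

theorem two_mul_correlation_eq (hmin : ∀ β', objective X y lam β ≤ objective X y lam β')
    {j : ι} (hj : β j ≠ 0) : 2 * correlation X y β j = lam * SignType.sign (β j) := by
  have hloc : IsLocalMin (fun t : ℝ => objective X y lam (β + Pi.single j t)) 0 := by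
    refine Filter.Eventually.of_forall fun t => ?_
    dsimp only
    rw [Pi.single_zero, add_zero]
    exact hmin _
  linarith [hloc.hasDerivAt_eq_zero (hasDerivAt_objective_add_single X y lam hj)]

theorem mem_equicorrelationSet_of_ne_zero (hlam : 0 ≤ lam)
    (hmin : ∀ β', objective X y lam β ≤ objective X y lam β') {j : ι} (hj : β j ≠ 0) :
    j ∈ equicorrelationSet X y lam β := by
  have h := two_mul_correlation_eq hmin hj
  show |_| = _
  rcases hj.lt_or_gt with hneg | hpos
  · rw [sign_neg hneg, SignType.coe_neg_one] at h
    rw [abs_of_nonpos (by linarith)]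
    linarith
  · rw [sign_pos hpos, SignType.coe_one] at h
    rw [abs_of_nonneg (by linarith)]
    linarith

theorem transpose_submatrixCols_mulVec_eq (hβ : ∀ j ∉ J, β j = 0) :
    (X.submatrixCols J)ᵀ *ᵥ y =
      ((X.submatrixCols J)ᵀ * X.submatrixCols J) *ᵥ J.domRestrict β +
        J.domRestrict (correlation X y β) := by
  have hXβ : X.submatrixCols J *ᵥ J.domRestrict β = X *ᵥ β := by
    ext i
    exact Fintype.sum_subtype_eq_sum_of_eq_zero (f := fun j => X i j * β j) fun j hj => by
      rw [hβ j hj, mul_zero]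
  have hcorr : J.domRestrict (correlation X y β) = (X.submatrixCols J)ᵀ *ᵥ (y - X *ᵥ β) := rfl
  rw [← mulVec_mulVec, hXβ, hcorr, ← mulVec_add, add_sub_cancel]

theorem isUnit_gram_of_rank_eq_ncard (hrank : (X.submatrixCols J).rank = J.ncard) :
    IsUnit ((X.submatrixCols J)ᵀ * X.submatrixCols J) :=
  isUnit_transpose_mul_self_of_rank_eq_card <| by
    rw [hrank, ← Nat.card_coe_set_eq, Nat.card_eq_fintype_card]

noncomputable def hyperplaneCoeff (X : Matrix m ι ℝ) (J : Set ι) (α : ι → ℝ) : J → ℝ :=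
  ((X.submatrixCols J)ᵀ * X.submatrixCols J)⁻¹ *ᵥ J.domRestrict α

noncomputable def hyperplaneNormal (X : Matrix m ι ℝ) (J : Set ι) (α : ι → ℝ) : m → ℝ :=
  X.submatrixCols J *ᵥ hyperplaneCoeff X J α

noncomputable def hyperplaneOffset (X : Matrix m ι ℝ) (J : Set ι) (α : ι → ℝ) (lam : ℝ)
    (z : ι → SignType) : ℝ :=
  lam / 2 * (hyperplaneCoeff X J α ⬝ᵥ J.domRestrict fun j => (z j : ℝ))

theorem hyperplaneNormal_ne_zero (hrank : (X.submatrixCols J).rank = J.ncard)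
    {j : ι} (hj : j ∈ J) (hα : α j ≠ 0) : hyperplaneNormal X J α ≠ 0 :=
  mulVec_inv_mulVec_ne_zero (isUnit_gram_of_rank_eq_ncard hrank) fun h => hα (congrFun h ⟨j, hj⟩)

theorem hyperplaneNormal_dotProduct_eq (hlam : 0 ≤ lam)
    (hmin : ∀ β', objective X y lam β ≤ objective X y lam β')
    (hJ : equicorrelationSet X y lam β = J)
    (hrank : (X.submatrixCols J).rank = J.ncard) (hαβ : α ⬝ᵥ β = 0) :
    hyperplaneNormal X J α ⬝ᵥ y =
      hyperplaneOffset X J α lam fun j => SignType.sign (correlation X y β j) := by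
  subst hJ
  set J := equicorrelationSet X y lam β
  have hβ (j) (hj : j ∉ J) : β j = 0 :=
    not_not.1 fun h => hj (mem_equicorrelationSet_of_ne_zero hlam hmin h)
  have hαβJ : J.domRestrict α ⬝ᵥ J.domRestrict β = 0 :=
    (Fintype.sum_subtype_eq_sum_of_eq_zero fun j hj => by simp only [hβ j hj, mul_zero]).trans hαβ
  have hcorr : J.domRestrict (correlation X y β) =
      (lam / 2) • J.domRestrict fun j => (SignType.sign (correlation X y β j) : ℝ) := by
    ext ⟨j, hj⟩
    rw [Pi.smul_apply, Set.domRestrict_apply, Set.domRestrict_apply, smul_eq_mul, ← hj.out,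
      abs_mul_sign]
  rw [hyperplaneNormal, hyperplaneCoeff, mulVec_inv_mulVec_dotProduct_of_transpose_mulVec_eq
    (isUnit_gram_of_rank_eq_ncard hrank) hαβJ (transpose_submatrixCols_mulVec_eq hβ), hcorr,
    dotProduct_smul, smul_eq_mul]
  rfl

end

end Lasso

open Lasso in
theorem stmt_14_general {Ω : Type*} [MeasurableSpace Ω] (μ : Measure Ω)
    (n q : ℕ)
    (X : Matrix (Fin n) (Fin q) ℝ) (βstar : Fin q → ℝ)
    (ε : Ω → Fin n → ℝ)
    (hsupp : ∀ a : Fin n → ℝ, a ≠ 0 → ∀ c : ℝ,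
      μ {ω | ∑ i, a i * ε ω i = c} = 0)
    (lam : ℝ) (hlam : 0 < lam) (α : Fin q → ℝ) :
    μ {ω | ∃ βhat : Fin q → ℝ,
        (∀ β : Fin q → ℝ,
          (∑ i, ((X.mulVec βstar + ε ω) i - X.mulVec βhat i) ^ 2) +
              lam * ∑ j, |βhat j| ≤
            (∑ i, ((X.mulVec βstar + ε ω) i - X.mulVec β i) ^ 2) +
              lam * ∑ j, |β j|) ∧
        (let J : Set (Fin q) := {j |
            |∑ i, X i j * ((X.mulVec βstar + ε ω) i - X.mulVec βhat i)| = lam / 2};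
          (X.submatrix id (Subtype.val : {j // j ∈ J} → Fin q)).rank = J.ncard) ∧
        (∑ j, α j * βhat j = 0) ∧ (∃ j, α j * βhat j ≠ 0)} = 0 := by
  refine measure_mono_null (t := ⋃ p : Set (Fin q) × (Fin q → SignType),
    {ω | hyperplaneNormal X p.1 α ≠ 0 ∧
      hyperplaneNormal X p.1 α ⬝ᵥ (X *ᵥ βstar + ε ω) = hyperplaneOffset X p.1 α lam p.2})
    ?_ (measure_iUnion_null fun p => ?_)
  · rintro ω ⟨βhat, hmin, hrank, hαβ, j, hj⟩
    set y := X *ᵥ βstar + ε ω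
    have hmin' : ∀ β, objective X y lam βhat ≤ objective X y lam β := hmin
    have hrank' : (X.submatrixCols (equicorrelationSet X y lam βhat)).rank =
        (equicorrelationSet X y lam βhat).ncard := hrank
    exact Set.mem_iUnion.2 ⟨(equicorrelationSet X y lam βhat,
        fun j => SignType.sign (correlation X y βhat j)),
      hyperplaneNormal_ne_zero hrank'
        (mem_equicorrelationSet_of_ne_zero hlam.le hmin' (right_ne_zero_of_mul hj))
        (left_ne_zero_of_mul hj),
      hyperplaneNormal_dotProduct_eq hlam.le hmin' rfl hrank' hαβ⟩
  · by_cases hw : hyperplaneNormal X p.1 α = 0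
    · simp [hw]
    refine measure_mono_null (fun ω hω => ?_)
      (hsupp _ hw (hyperplaneOffset X p.1 α lam p.2 - hyperplaneNormal X p.1 α ⬝ᵥ X *ᵥ βstar))
    have hy := hω.2
    rw [dotProduct_add] at hy
    exact eq_sub_of_add_eq' hy

/-- Hyperplane-avoidance for the Lasso solution (Result A.1): let `y = Xβ* + ε`
where the distribution of `ε` charges no affine hyperplane (operatively: every
nontrivial linear functional of `ε` takes any fixed value with probability zero,
as for a nondegenerate Gaussian `N(0, σ²Iₙ)`), and `λ > 0`.  Fix `α ≠ 0`.  Then the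
event that the Lasso minimizer `β̂` of `‖y - Xβ‖²₂ + λ‖β‖₁` exists (it is unique on
this event) with `X` restricted to the equicorrelation set
`Ĵ_λ = {j : |x_jᵀ(y - Xβ̂)| = λ/2}` of rank `|Ĵ_λ|`, with `αᵀβ̂ = 0` and
`α_j β̂_j ≠ 0` for some `j`, has probability zero. -/
theorem stmt_14 {Ω : Type*} [MeasurableSpace Ω] (μ : Measure Ω)
    [IsProbabilityMeasure μ] (n q : ℕ)
    (X : Matrix (Fin n) (Fin q) ℝ) (βstar : Fin q → ℝ)
    (ε : Ω → Fin n → ℝ)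
    (hsupp : ∀ a : Fin n → ℝ, a ≠ 0 → ∀ c : ℝ,
      μ {ω | ∑ i, a i * ε ω i = c} = 0)
    (lam : ℝ) (hlam : 0 < lam) (α : Fin q → ℝ) (hα : α ≠ 0) :
    μ {ω | ∃ βhat : Fin q → ℝ,
        (∀ β : Fin q → ℝ,
          (∑ i, ((X.mulVec βstar + ε ω) i - X.mulVec βhat i) ^ 2) +
              lam * ∑ j, |βhat j| ≤
            (∑ i, ((X.mulVec βstar + ε ω) i - X.mulVec β i) ^ 2) +
              lam * ∑ j, |β j|) ∧
        (let J : Set (Fin q) := {j |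
            |∑ i, X i j * ((X.mulVec βstar + ε ω) i - X.mulVec βhat i)| = lam / 2};
          (X.submatrix id (Subtype.val : {j // j ∈ J} → Fin q)).rank = J.ncard) ∧
        (∑ j, α j * βhat j = 0) ∧ (∃ j, α j * βhat j ≠ 0)} = 0 :=
  stmt_14_general μ n q X βstar ε hsupp lam hlam α
end
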